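/- For positive integers n ≥ 2 and m ≥ 0, the complete homogeneous symmetric polynomial of degree m evaluated at all n-th roots of unity satisfies H_m(1, ζ_n, ζ_n^2, ..., ζ_n^{n−1}) = 1 if n divides m, and 0 otherwise. -/

import Mathlib

open Polynomial

/-- The complete homogeneous symmetric polynomial of degree `r`
evaluated at the entries of a list. -/
noncomputable def hsymmEval : List ℂ → ℕ → ℂ
  | _, 0 => 1
  | [], _ + 1 => 0
  | x :: xs, r + 1 => x * hsymmEval (x :: xs) r + hsymmEval xs (r + 1)
  termination_by l r => (r, l.length)

/-- The list of the `φ(m)` primitive `m`-th roots of unity. -/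
noncomputable def primRoots (m : ℕ) : List ℂ :=
  ((List.range m).filter (fun j => Nat.gcd (j + 1) m = 1)).map
    (fun j => Complex.exp (2 * (Real.pi : ℂ) * Complex.I * (j + 1 : ℕ) / (m : ℂ)))

/-- The list of the non-primitive `m`-th roots of unity. -/
noncomputable def nonPrimRoots (m : ℕ) : List ℂ :=
  ((List.range m).filter (fun j => 1 < Nat.gcd (j + 1) m)).map
    (fun j => Complex.exp (2 * (Real.pi : ℂ) * Complex.I * (j + 1 : ℕ) / (m : ℂ)))


/-! The generating function `∑ₘ Hₘ(x₁, …, xₖ) tᵐ` is `∏ᵢ (1 - xᵢ t)⁻¹`. Over the `n`-th roots of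
unity `∏ᵢ (1 - ζⁱ t) = 1 - tⁿ`, whose inverse is `∑ₖ tⁿᵏ`. -/

open PowerSeries (mk expand)
open scoped PowerSeries

@[simp]
lemma hsymmEval_zero (l : List ℂ) : hsymmEval l 0 = 1 := by
  cases l <;> simp [hsymmEval]

@[simp]
lemma hsymmEval_nil_succ (r : ℕ) : hsymmEval [] (r + 1) = 0 := by
  simp [hsymmEval]

lemma hsymmEval_cons_succ (x : ℂ) (xs : List ℂ) (r : ℕ) :
    hsymmEval (x :: xs) (r + 1) = x * hsymmEval (x :: xs) r + hsymmEval xs (r + 1) := by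
  simp [hsymmEval]

lemma mk_hsymmEval_nil : mk (hsymmEval []) = 1 := by
  ext (_ | r) <;> simp [PowerSeries.coeff_one]

lemma mk_hsymmEval_cons_mul (x : ℂ) (xs : List ℂ) :
    mk (hsymmEval (x :: xs)) * (1 - PowerSeries.C x * PowerSeries.X) = mk (hsymmEval xs) := by
  ext (_ | r)
  · simp
  · rw [mul_sub, mul_one, mul_comm (PowerSeries.C x), ← mul_assoc, map_sub,
      PowerSeries.coeff_mul_C, PowerSeries.coeff_succ_mul_X, PowerSeries.coeff_mk,
      PowerSeries.coeff_mk, PowerSeries.coeff_mk, hsymmEval_cons_succ]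
    ring

theorem mk_hsymmEval_mul_prod_one_sub (l : List ℂ) :
    mk (hsymmEval l) * (l.map fun x => 1 - PowerSeries.C x * PowerSeries.X).prod = 1 := by
  induction l with
  | nil => simp [mk_hsymmEval_nil]
  | cons x xs ih => rw [List.map_cons, List.prod_cons, ← mul_assoc, mk_hsymmEval_cons_mul, ih]

theorem PowerSeries.expand_mk_one_mul_one_sub_X_pow {R : Type*} [CommRing R] (n : ℕ)
    (hn : n ≠ 0) : expand n hn (mk 1 : R⟦X⟧) * (1 - X ^ n) = 1 := by
  simpa [expand_X] using congrArg (expand n hn) (mk_one_mul_one_sub_eq_one R)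

theorem hsymmEval_eq_ite_dvd_of_prod_one_sub (l : List ℂ) {n : ℕ} (hn : n ≠ 0)
    (hl : (l.map fun x => 1 - PowerSeries.C x * PowerSeries.X).prod = 1 - PowerSeries.X ^ n)
    (m : ℕ) : hsymmEval l m = if n ∣ m then 1 else 0 := by
  have hinv := mk_hsymmEval_mul_prod_one_sub l
  rw [hl] at hinv
  have hgeom : mk (hsymmEval l) = expand n hn (mk 1) := left_inv_eq_right_inv hinv
    ((mul_comm _ _).trans (PowerSeries.expand_mk_one_mul_one_sub_X_pow n hn))
  simpa [PowerSeries.coeff_expand] using congrArg (PowerSeries.coeff m) hgeom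

theorem IsPrimitiveRoot.pow_sub_pow_eq_prod_range {R : Type*} [CommRing R] [IsDomain R]
    {ζ : R} {n : ℕ} (h : IsPrimitiveRoot ζ n) (hn : 0 < n) (x y : R) :
    x ^ n - y ^ n = ∏ i ∈ Finset.range n, (x - ζ ^ i * y) := by
  classical
  rw [h.pow_sub_pow_eq_prod_sub_mul x y hn, nthRootsFinset,
    ← Multiset.toFinset_eq h.nthRoots_one_nodup, Finset.prod_mk, h.nthRoots_eq (one_pow n),
    Multiset.map_map, Finset.prod_eq_multiset_prod, Finset.range_val]
  simp

theorem IsPrimitiveRoot.prod_map_range_one_sub_C_mul_X {R : Type*} [CommRing R] [IsDomain R]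
    {ζ : R} {n : ℕ} (h : IsPrimitiveRoot ζ n) (hn : 0 < n) :
    (((List.range n).map (ζ ^ ·)).map fun x => 1 - PowerSeries.C x * PowerSeries.X).prod =
      1 - PowerSeries.X ^ n := by
  rw [List.map_map, ← one_pow n,
    (h.map_of_injective PowerSeries.C_injective).pow_sub_pow_eq_prod_range hn,
    Finset.prod_eq_multiset_prod, Finset.range_val]
  simp [Multiset.range, Function.comp_def, map_pow]

theorem hsymm_all_roots_of_unity (n m : ℕ) :
    hsymmEval
        ((List.range n).map
          (fun j => Complex.exp (2 * (Real.pi : ℂ) * Complex.I * (j : ℕ) / (n : ℂ)))) m =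
      if n ∣ m then 1 else 0 := by
  rcases n.eq_zero_or_pos with rfl | hn
  · cases m <;> simp
  set ω := Complex.exp (2 * Real.pi * Complex.I / n)
  have hω : IsPrimitiveRoot ω n := Complex.isPrimitiveRoot_exp n hn.ne'
  have hroots : (List.range n).map
      (fun j => Complex.exp (2 * (Real.pi : ℂ) * Complex.I * (j : ℕ) / (n : ℂ))) =
      (List.range n).map (ω ^ ·) := by
    refine List.map_congr_left fun j _ => ?_
    rw [← Complex.exp_nat_mul]
    ring_nf
  rw [hroots]
  exact hsymmEval_eq_ite_dvd_of_prod_one_sub _ hn.ne' (hω.prod_map_range_one_sub_C_mul_X hn) m
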